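/- Let S, S̃ be subspaces of ℝ^n. Suppose that for every z ∈ S̃⊥ having at least one positive component, at least one of the following holds: (a) there is no s ∈ S with s ≥ 0 componentwise and {i : s_i > 0} = {i : z_i > 0}; (b) there is no r ∈ S with r_i > 0 for every index i with z_i ≠ 0. Then the pair (S, S̃) is nondegenerate. -/

import Mathlib

open scoped BigOperators

noncomputable section

/-- The generalized exponential map `F_c(x) = ∑ i, c_i exp(w̃^i · x) w^i`. -/
def Fmap {d dt n : ℕ} (W : Matrix (Fin d) (Fin n) ℝ) (Wt : Matrix (Fin dt) (Fin n) ℝ)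
    (c : Fin n → ℝ) (x : Fin dt → ℝ) : Fin d → ℝ :=
  fun i => ∑ j, c j * Real.exp (∑ k, Wt k j * x k) * W i j

/-- The polyhedral cone generated by the columns of `W`. -/
def coneOf {d n : ℕ} (W : Matrix (Fin d) (Fin n) ℝ) : Set (Fin d → ℝ) :=
  {y | ∃ u : Fin n → ℝ, (∀ j, 0 ≤ u j) ∧ y = fun i => ∑ j, u j * W i j}

/-- The componentwise sign vector. -/
def signVec {n : ℕ} (x : Fin n → ℝ) : Fin n → SignType := fun i => SignType.sign (x i)

/-- The set of sign vectors of a set of real vectors. -/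
def signSet {n : ℕ} (T : Set (Fin n → ℝ)) : Set (Fin n → SignType) := signVec '' T

/-- The kernel of (the linear map given by) a matrix, as a set. -/
def kerSet {d n : ℕ} (W : Matrix (Fin d) (Fin n) ℝ) : Set (Fin n → ℝ) :=
  {x | W.mulVec x = 0}

/-- The orthogonal complement (w.r.t. the standard inner product) of a set in `ℝ^n`. -/
def orthSet {n : ℕ} (T : Set (Fin n → ℝ)) : Set (Fin n → ℝ) :=
  {v | ∀ u ∈ T, ∑ i, u i * v i = 0}

/-- The partial order on sign vectors: `τ ≤ ρ` iff for each `i`, `τ i = 0` or `τ i = ρ i`. -/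
def sleq {n : ℕ} (τ ρ : Fin n → SignType) : Prop := ∀ i, τ i = 0 ∨ τ i = ρ i

/-- The nonnegative elements (components in `{0,+}`) of a set of sign vectors. -/
def plusPart {n : ℕ} (T : Set (Fin n → SignType)) : Set (Fin n → SignType) :=
  {τ ∈ T | ∀ i, 0 ≤ τ i}

/-- Condition (ii): every nonzero nonnegative sign vector of `S̃⊥` dominates a nonzero
nonnegative sign vector of `S⊥`. -/
def condII {n : ℕ} (S St : Set (Fin n → ℝ)) : Prop :=
  ∀ τt ∈ plusPart (signSet (orthSet St)), τt ≠ 0 →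
    ∃ τ ∈ plusPart (signSet (orthSet S)), τ ≠ 0 ∧ sleq τ τt

/-- Condition (iii): the pair `(S, S̃)` is nondegenerate. -/
def Nondeg {n : ℕ} (S St : Set (Fin n → ℝ)) : Prop :=
  ∀ z ∈ orthSet St, (∃ i, 0 < z i) →
    (∃ lam : ℝ, 0 < lam ∧
      (fun i => if z i = lam then SignType.pos else 0) ∉ plusPart (signSet S)) ∨
    (∃ τ ∈ plusPart (signSet (orthSet S)), τ ≠ 0 ∧ ∀ i, z i = 0 → τ i = 0)

/-!
If alternative (a) holds for `z`, some positive level set `{z = λ}` cannot be the positive set of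
a nonnegative vector of `S`: otherwise the sum of such vectors over the finitely many positive
values of `z` would be a nonnegative vector of `S` whose positive set is `{z > 0}`.
If alternative (b) holds, no vector of `S` is positive on the support of `z`, so by Stiemke's
theorem (Hahn–Banach separation of `S⊥` from the simplex spanned by that support) some nonzero
nonnegative `v ∈ S⊥` is supported in the support of `z`; its sign vector is the required `τ`.
-/

section

variable {n : ℕ}

lemma sign_eq_ite_iff {a : ℝ} {P : Prop} [Decidable P] :
    SignType.sign a = (if P then SignType.pos else 0) ↔ 0 ≤ a ∧ (0 < a ↔ P) := by
  by_cases hp : P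
  · rw [if_pos hp, iff_true_intro hp, iff_true]
    exact ⟨fun h => ⟨(sign_eq_one_iff.1 h).le, sign_eq_one_iff.1 h⟩, fun h => sign_eq_one_iff.2 h.2⟩
  · rw [if_neg hp, iff_false_intro hp, iff_false, not_lt, sign_eq_zero_iff]
    exact ⟨fun h => ⟨h.ge, h.le⟩, fun h => le_antisymm h.2 h.1⟩

lemma signVec_eq_ite_iff {x : Fin n → ℝ} {p : Fin n → Prop} [DecidablePred p] :
    signVec x = (fun i => if p i then SignType.pos else 0) ↔ (∀ i, 0 ≤ x i) ∧ ∀ i, 0 < x i ↔ p i := by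
  simp only [funext_iff, signVec, sign_eq_ite_iff, forall_and]

lemma signVec_eq_zero_iff {x : Fin n → ℝ} : signVec x = 0 ↔ x = 0 := by
  simp [funext_iff, signVec]

lemma signVec_mem_plusPart_signSet {T : Set (Fin n → ℝ)} {x : Fin n → ℝ} (hx : x ∈ T)
    (hnonneg : ∀ i, 0 ≤ x i) : signVec x ∈ plusPart (signSet T) :=
  ⟨⟨x, hx, rfl⟩, fun i => sign_nonneg_iff.2 (hnonneg i)⟩

lemma exists_nonneg_mem_posSet_eq_of_levelSets (S : Submodule ℝ (Fin n → ℝ)) (z : Fin n → ℝ)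
    (h : ∀ lam : ℝ, 0 < lam →
      (fun i => if z i = lam then SignType.pos else 0) ∈ plusPart (signSet (S : Set (Fin n → ℝ)))) :
    ∃ s ∈ S, (∀ i, 0 ≤ s i) ∧ {i | 0 < s i} = {i | 0 < z i} := by
  have hlevel : ∀ lam : ℝ, 0 < lam → ∃ x ∈ S, (∀ i, 0 ≤ x i) ∧ ∀ i, 0 < x i ↔ z i = lam := by
    intro lam hlam
    obtain ⟨⟨x, hxS, hx⟩, -⟩ := h lam hlam
    exact ⟨x, hxS, signVec_eq_ite_iff.1 hx⟩
  choose! x hxS hx_nonneg hx_pos using hlevel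
  set L := (Finset.univ.filter fun i => 0 < z i).image z
  have hL : ∀ lam ∈ L, 0 < lam := by
    simp only [L, Finset.mem_image, Finset.mem_filter]
    rintro _ ⟨i, ⟨-, hi⟩, rfl⟩
    exact hi
  refine ⟨∑ lam ∈ L, x lam, S.sum_mem fun lam hlam => hxS lam (hL lam hlam), fun i => ?_, ?_⟩
  · rw [Finset.sum_apply]
    exact Finset.sum_nonneg fun lam hlam => hx_nonneg lam (hL lam hlam) i
  · ext i
    simp only [Set.mem_ofPred_eq, Finset.sum_apply]
    rw [Finset.sum_pos_iff_of_nonneg fun lam hlam => hx_nonneg lam (hL lam hlam) i]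
    constructor
    · rintro ⟨lam, hlam, hpos⟩
      exact (hx_pos lam (hL lam hlam) i).1 hpos ▸ hL lam hlam
    · intro hzi
      exact ⟨z i, Finset.mem_image_of_mem z (by simpa using hzi), (hx_pos (z i) hzi i).2 rfl⟩

def orthSubmodule (S : Submodule ℝ (Fin n → ℝ)) : Submodule ℝ (Fin n → ℝ) :=
  S.dualAnnihilator.comap (dotProductEquiv ℝ (Fin n)).toLinearMap

lemma coe_orthSubmodule (S : Submodule ℝ (Fin n → ℝ)) :
    (orthSubmodule S : Set (Fin n → ℝ)) = orthSet (S : Set (Fin n → ℝ)) := by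
  ext v
  simp [orthSubmodule, orthSet, Submodule.mem_dualAnnihilator, dotProduct, mul_comm]

lemma mem_of_forall_mem_orthSet_dotProduct_eq_zero {S : Submodule ℝ (Fin n → ℝ)}
    {r : Fin n → ℝ} (h : ∀ v ∈ orthSet (S : Set (Fin n → ℝ)), r ⬝ᵥ v = 0) : r ∈ S := by
  rw [← Subspace.forall_mem_dualAnnihilator_apply_eq_zero_iff]
  intro φ hφ
  obtain ⟨v, rfl⟩ := (dotProductEquiv ℝ (Fin n)).surjective φ
  have hv : v ∈ orthSet (S : Set (Fin n → ℝ)) := by rw [← coe_orthSubmodule]; exact hφ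
  simpa [dotProduct_comm] using h v hv

lemma LinearMap.eq_zero_on_of_forall_lt {M : Type*} [AddCommGroup M] [Module ℝ M]
    (f : M →ₗ[ℝ] ℝ) {W : Submodule ℝ M} {u : ℝ} (h : ∀ x ∈ W, f x < u) : ∀ x ∈ W, f x = 0 := by
  intro x hx
  by_contra hfx
  have := h ((u / f x) • x) (W.smul_mem _ hx)
  rw [map_smul, smul_eq_mul, div_mul_cancel₀ _ hfx] at this
  exact lt_irrefl u this

theorem stiemke (S : Submodule ℝ (Fin n → ℝ)) (J : Set (Fin n))
    (h : ∀ v ∈ orthSet (S : Set (Fin n → ℝ)), (∀ i, 0 ≤ v i) → (∀ i ∉ J, v i = 0) → v = 0) :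
    ∃ r ∈ S, ∀ j ∈ J, 0 < r j := by
  set K := stdSimplex ℝ (Fin n) ∩ Jᶜ.pi fun _ => ({0} : Set ℝ)
  have hK_convex : Convex ℝ K :=
    (convex_stdSimplex ℝ _).inter (convex_pi fun _ _ => convex_singleton 0)
  have hK_compact : IsCompact K :=
    (isCompact_stdSimplex ℝ _).inter_right (isClosed_set_pi fun _ _ => isClosed_singleton)
  have hdisj : Disjoint (orthSubmodule S : Set (Fin n → ℝ)) K := by
    rw [Set.disjoint_left]
    rintro v hv ⟨⟨hnonneg, hsum⟩, hsupp⟩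
    rw [coe_orthSubmodule] at hv
    rw [h v hv hnonneg hsupp] at hsum
    simp at hsum
  obtain ⟨f, u, w, hfu, huw, hfw⟩ := geometric_hahn_banach_closed_compact (orthSubmodule S).convex
    (orthSubmodule S).closed_of_finiteDimensional hK_convex hK_compact hdisj
  have hf_orth := f.toLinearMap.eq_zero_on_of_forall_lt hfu
  set r := (dotProductEquiv ℝ (Fin n)).symm f.toLinearMap
  have hr : ∀ y, r ⬝ᵥ y = f y := fun y =>
    LinearMap.congr_fun ((dotProductEquiv ℝ (Fin n)).apply_symm_apply f.toLinearMap) y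
  refine ⟨r, mem_of_forall_mem_orthSet_dotProduct_eq_zero fun v hv => ?_, fun j hj => ?_⟩
  · rw [hr]
    exact hf_orth v (by rw [← coe_orthSubmodule] at hv; exact hv)
  · have hjK : Pi.single j 1 ∈ K := by
      refine ⟨⟨fun i => ?_, by simp⟩, fun i hi => ?_⟩
      · by_cases hij : i = j <;> simp [hij]
      · simp [show i ≠ j from fun hij => hi (hij ▸ hj)]
    have hu : 0 < u := by simpa using hfu 0 (orthSubmodule S).zero_mem
    have := hfw _ hjK
    rw [← hr, dotProduct_single, mul_one] at this
    linarith

end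

/-- a sufficient sign-vector condition (iv) for nondegeneracy of `(S, S̃)`. -/
theorem stmt12 {n : ℕ} (S St : Submodule ℝ (Fin n → ℝ))
    (h : ∀ z ∈ orthSet (St : Set (Fin n → ℝ)), (∃ i, 0 < z i) →
      (¬∃ s ∈ S, (∀ i, 0 ≤ s i) ∧ {i | 0 < s i} = {i | 0 < z i}) ∨
      (¬∃ r ∈ S, ∀ i, z i ≠ 0 → 0 < r i)) :
    Nondeg (S : Set (Fin n → ℝ)) (St : Set (Fin n → ℝ)) := by
  intro z hz hpos
  rcases h z hz hpos with hs | hr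
  · left
    by_contra! hlevel
    exact hs (exists_nonneg_mem_posSet_eq_of_levelSets S z hlevel)
  · right
    by_contra! hτ
    refine hr (stiemke S {i | z i ≠ 0} fun v hv hnonneg hsupp => ?_)
    by_contra hv0
    obtain ⟨i, hzi, hvi⟩ :=
      hτ _ (signVec_mem_plusPart_signSet hv hnonneg) (mt signVec_eq_zero_iff.1 hv0)
    exact hvi (by simp [signVec, hsupp i (not_not.2 hzi)])
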